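/- For a rooted graph (G,o) with monomer activity z ∈ ℂ with Re(z) > 0 and nonnegative dimer weights, the root monomer probability M_z(G,o) = z·Z_{G−o}(z)/Z_G(z) satisfies |M_z(G,o)| ≤ |z|/Re(z). -/

import Mathlib

open scoped BigOperators
open MeasureTheory Filter Finset

attribute [local instance] Classical.propDecidable

noncomputable section

variable {V : Type*} [Fintype V] [DecidableEq V]

/-- `D` is a monomer-dimer configuration (matching) within the edge set `E`. -/
def IsMatchingIn (E D : Finset (Sym2 V)) : Prop :=
  D ⊆ E ∧ (∀ e ∈ D, ¬ e.IsDiag) ∧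
    ∀ e ∈ D, ∀ f ∈ D, e ≠ f → ∀ v : V, ¬(v ∈ e ∧ v ∈ f)

/-- All matchings of the edge set `E`. -/
def matchingsIn (E : Finset (Sym2 V)) : Finset (Finset (Sym2 V)) :=
  E.powerset.filter (fun D => IsMatchingIn E D)

/-- `M(D)`: the set of vertices not covered by the matching `D` (the monomers). -/
def uncovered (D : Finset (Sym2 V)) : Finset V :=
  Finset.univ.filter (fun v => ∀ e ∈ D, v ∉ e)

/-- `x_i * x_j` for the edge `e = {i,j}`. -/
def edgeProd (x : V → ℝ) : Sym2 V → ℝ :=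
  Sym2.lift ⟨fun a b => x a * x b, fun a b => mul_comm _ _⟩

/-- The monomer-dimer partition function with dimer activities `w` and monomer
activities `x` on the graph with edge set `E`. -/
def partFun (E : Finset (Sym2 V)) (w : Sym2 V → ℝ) (x : V → ℝ) : ℝ :=
  ∑ D ∈ matchingsIn E, (∏ e ∈ D, w e) * ∏ i ∈ uncovered D, x i

/-- The edge set of the complete graph on `V`. -/
def completeEdges (V : Type*) [Fintype V] [DecidableEq V] : Finset (Sym2 V) :=
  Finset.univ.filter (fun e : Sym2 V => ¬ e.IsDiag)

/-- Matching polynomial of the induced subgraph on the vertex subset `S`, with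
dimer weights `w` and complex monomer variable. -/
def matchPolyS (S : Finset V) (w : Sym2 V → ℝ) : Polynomial ℂ :=
  ∑ D ∈ matchingsIn ((completeEdges V).filter (fun e => ∀ v ∈ e, v ∈ S)),
    Polynomial.C (∏ e ∈ D, (w e : ℂ)) * Polynomial.X ^ (S.card - 2 * D.card)

/-! Write `Z_S` for the matching polynomial of the vertex set `S` evaluated at `z`. Splitting
according to whether `o` is a monomer or matched to some `j` gives the Heilmann–Lieb recursion
`Z_S = z Z_{S-o} + ∑_j w_{oj} Z_{S-o-j}`, so `R = Z_S / Z_{S-o}` equals `z + ∑_j w_{oj} / R'`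
with `R' = Z_{S-o} / Z_{S-o-j}` a ratio of the same kind. Inversion preserves the right
half-plane and the weights are nonnegative, so induction on `S` gives `Re z ≤ Re R`; in particular
`Z_S ≠ 0`, and `|z Z_{S-o} / Z_S| = |z| / |R| ≤ |z| / Re R ≤ |z| / Re z`. -/

theorem le_re_div_of_eq_mul_add_sum {ι : Type*} (s : Finset ι) {a b z : ℂ} {r : ι → ℝ}
    {c : ι → ℂ} (hb : b ≠ 0) (hr : ∀ j ∈ s, 0 ≤ r j) (hc : ∀ j ∈ s, 0 ≤ (b / c j).re)
    (h : a = z * b + ∑ j ∈ s, r j * c j) : z.re ≤ (a / b).re := by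
  have hdiv : a / b = z + ∑ j ∈ s, r j * (b / c j)⁻¹ := by
    simp only [h, add_div, mul_div_cancel_right₀ _ hb, Finset.sum_div, inv_div, mul_div_assoc]
  have hterm : ∀ j ∈ s, 0 ≤ (r j * (b / c j)⁻¹ : ℂ).re := fun j hj => by
    rw [Complex.re_ofReal_mul, Complex.inv_re]
    exact mul_nonneg (hr j hj) (div_nonneg (hc j hj) (Complex.normSq_nonneg _))
  rw [hdiv, Complex.add_re, Complex.re_sum]
  linarith [Finset.sum_nonneg hterm]

theorem norm_div_le_norm_div_re {z q : ℂ} (hz : 0 < z.re) (hq : z.re ≤ q.re) :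
    ‖z / q‖ ≤ ‖z‖ / z.re := by
  rw [norm_div]
  exact div_le_div_of_nonneg_left (norm_nonneg z) hz (hq.trans (Complex.re_le_norm q))

omit [Fintype V] [DecidableEq V] in
theorem mem_matchingsIn {E D : Finset (Sym2 V)} : D ∈ matchingsIn E ↔ IsMatchingIn E D := by
  simp only [matchingsIn, Finset.mem_filter, Finset.mem_powerset, and_iff_right_iff_imp]
  exact And.left

omit [Fintype V] [DecidableEq V] in
theorem isMatchingIn_filter {E D : Finset (Sym2 V)} {p : Sym2 V → Prop} [DecidablePred p] :
    IsMatchingIn (E.filter p) D ↔ IsMatchingIn E D ∧ ∀ e ∈ D, p e := by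
  simp only [IsMatchingIn, Finset.subset_iff, Finset.mem_filter]
  grind

omit [Fintype V] in
theorem isMatchingIn_insert {E D : Finset (Sym2 V)} {e : Sym2 V} (he : e ∉ D) :
    IsMatchingIn E (insert e D) ↔
      IsMatchingIn E D ∧ e ∈ E ∧ ¬ e.IsDiag ∧ ∀ f ∈ D, ∀ v ∈ e, v ∉ f := by
  simp only [IsMatchingIn, Finset.insert_subset_iff, Finset.forall_mem_insert]
  grind

def edgesOn (S : Finset V) : Finset (Sym2 V) :=
  (completeEdges V).filter (fun e => ∀ v ∈ e, v ∈ S)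

theorem mem_edgesOn {S : Finset V} {e : Sym2 V} :
    e ∈ edgesOn S ↔ ¬ e.IsDiag ∧ ∀ v ∈ e, v ∈ S := by
  simp [edgesOn, completeEdges]

theorem edgesOn_erase (S : Finset V) (o : V) :
    edgesOn (S.erase o) = (edgesOn S).filter (fun e => o ∉ e) := by
  ext e
  simp only [mem_edgesOn, Finset.mem_filter, Finset.mem_erase]
  grind

theorem isMatchingIn_edgesOn_erase {S : Finset V} {o : V} {D : Finset (Sym2 V)} :
    IsMatchingIn (edgesOn (S.erase o)) D ↔ IsMatchingIn (edgesOn S) D ∧ ∀ e ∈ D, o ∉ e := by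
  rw [edgesOn_erase, isMatchingIn_filter]

theorem two_mul_card_le_card {S : Finset V} {D : Finset (Sym2 V)}
    (hD : IsMatchingIn (edgesOn S) D) : 2 * D.card ≤ S.card := by
  obtain ⟨hsub, hdiag, hdisj⟩ := hD
  calc 2 * D.card = ∑ e ∈ D, e.toFinset.card := by
        rw [Finset.sum_congr rfl fun e he => Sym2.card_toFinset_of_not_isDiag e (hdiag e he),
          Finset.sum_const, smul_eq_mul, mul_comm]
    _ = (D.biUnion Sym2.toFinset).card := by
        refine (Finset.card_biUnion fun e he f hf hef => ?_).symm
        exact Finset.disjoint_left.mpr fun v hve hvf =>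
          hdisj e he f hf hef v ⟨Sym2.mem_toFinset.mp hve, Sym2.mem_toFinset.mp hvf⟩
    _ ≤ S.card := Finset.card_le_card fun v hv => by
        obtain ⟨e, he, hve⟩ := Finset.mem_biUnion.mp hv
        exact (mem_edgesOn.mp (hsub he)).2 v (Sym2.mem_toFinset.mp hve)

theorem matchingsIn_edgesOn_erase (S : Finset V) (o : V) :
    matchingsIn (edgesOn (S.erase o)) =
      (matchingsIn (edgesOn S)).filter (fun D => ∀ e ∈ D, o ∉ e) := by
  ext D
  simp only [Finset.mem_filter, mem_matchingsIn, isMatchingIn_edgesOn_erase]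

theorem isMatchingIn_edgesOn_erase_erase {S : Finset V} {o j : V} {D : Finset (Sym2 V)} :
    IsMatchingIn (edgesOn ((S.erase o).erase j)) D ↔
      IsMatchingIn (edgesOn S) D ∧ ∀ f ∈ D, ∀ v ∈ s(o, j), v ∉ f := by
  simp only [isMatchingIn_edgesOn_erase, Sym2.mem_iff, forall_eq_or_imp, forall_eq]
  grind

theorem matchingsIn_edgesOn_covering_eq_biUnion {S : Finset V} {o : V} (ho : o ∈ S) :
    (matchingsIn (edgesOn S)).filter (fun D => ¬ ∀ e ∈ D, o ∉ e) =
      (S.erase o).biUnion fun j =>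
        (matchingsIn (edgesOn ((S.erase o).erase j))).image (insert s(o, j)) := by
  ext D
  simp only [Finset.mem_filter, Finset.mem_biUnion, Finset.mem_image, mem_matchingsIn,
    isMatchingIn_edgesOn_erase_erase, not_forall, not_not]
  constructor
  · rintro ⟨hD, e, he, hoe⟩
    obtain ⟨j, rfl⟩ := Sym2.mem_iff_exists.mp hoe
    rw [← Finset.insert_erase he, isMatchingIn_insert (Finset.notMem_erase _ _)] at hD
    obtain ⟨hD', hoj, hdiag, hdisj⟩ := hD
    refine ⟨j, Finset.mem_erase.mpr ⟨?_, (mem_edgesOn.mp hoj).2 j (by simp)⟩,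
      D.erase s(o, j), ⟨hD', hdisj⟩, Finset.insert_erase he⟩
    rintro rfl
    exact hdiag (Sym2.mk_isDiag_iff.mpr rfl)
  · rintro ⟨j, hj, D', ⟨hD', hdisj⟩, rfl⟩
    obtain ⟨hjo, hjS⟩ := Finset.mem_erase.mp hj
    have hnot : s(o, j) ∉ D' := fun h => hdisj _ h o (by simp) (by simp)
    have hdiag : ¬ s(o, j).IsDiag := by simpa [Sym2.mk_isDiag_iff] using hjo.symm
    have hoj : s(o, j) ∈ edgesOn S := mem_edgesOn.mpr ⟨hdiag, by simp [ho, hjS]⟩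
    exact ⟨(isMatchingIn_insert hnot).mpr ⟨hD', hoj, hdiag, hdisj⟩, s(o, j), by simp, by simp⟩

theorem notMem_of_mem_matchingsIn_edgesOn_erase_erase {S : Finset V} {o j : V}
    {D : Finset (Sym2 V)} (hD : D ∈ matchingsIn (edgesOn ((S.erase o).erase j))) (k : V) :
    s(o, k) ∉ D := fun h =>
  (isMatchingIn_edgesOn_erase_erase.mp (mem_matchingsIn.mp hD)).2 _ h o (by simp) (by simp)

open Polynomial

theorem matchPolyS_eq_sum (S : Finset V) (w : Sym2 V → ℝ) :
    matchPolyS S w = ∑ D ∈ matchingsIn (edgesOn S),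
      C (∏ e ∈ D, (w e : ℂ)) * X ^ (S.card - 2 * D.card) :=
  rfl

theorem matchPolyS_empty (w : Sym2 V → ℝ) : matchPolyS (∅ : Finset V) w = 1 := by
  have hE : edgesOn (∅ : Finset V) = ∅ :=
    Finset.eq_empty_of_forall_notMem fun e he =>
      Finset.notMem_empty _ ((mem_edgesOn.mp he).2 _ (Sym2.out_fst_mem e))
  have hM : matchingsIn (∅ : Finset (Sym2 V)) = {∅} := by
    ext D
    simp only [mem_matchingsIn, IsMatchingIn, Finset.subset_empty, Finset.mem_singleton]
    exact ⟨And.left, by rintro rfl; simp⟩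
  simp [matchPolyS_eq_sum, hE, hM]

/-- The Heilmann–Lieb recursion: `o` is either a monomer or matched to some `j`. -/
theorem matchPolyS_eq_X_mul_add_sum (w : Sym2 V → ℝ) {S : Finset V} {o : V} (ho : o ∈ S) :
    matchPolyS S w = X * matchPolyS (S.erase o) w +
      ∑ j ∈ S.erase o, C (w s(o, j) : ℂ) * matchPolyS ((S.erase o).erase j) w := by
  rw [matchPolyS_eq_sum, ← Finset.sum_filter_add_sum_filter_not _ (fun D => ∀ e ∈ D, o ∉ e),
    ← matchingsIn_edgesOn_erase, matchingsIn_edgesOn_covering_eq_biUnion ho,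
    Finset.sum_biUnion ?disjoint]
  congr 1
  · rw [matchPolyS_eq_sum, Finset.mul_sum]
    refine Finset.sum_congr rfl fun D hD => ?_
    have hcard := two_mul_card_le_card (mem_matchingsIn.mp hD)
    have hS : 0 < S.card := Finset.card_pos.mpr ⟨o, ho⟩
    rw [Finset.card_erase_of_mem ho] at hcard ⊢
    rw [show S.card - 2 * D.card = S.card - 1 - 2 * D.card + 1 by omega, pow_succ]
    ring
  · refine Finset.sum_congr rfl fun j hj => ?_
    rw [Finset.sum_image ?injective, matchPolyS_eq_sum, Finset.mul_sum]
    · refine Finset.sum_congr rfl fun D hD => ?_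
      have hnot := notMem_of_mem_matchingsIn_edgesOn_erase_erase hD j
      rw [Finset.prod_insert hnot, Finset.card_insert_of_notMem hnot,
        Finset.card_erase_of_mem hj, Finset.card_erase_of_mem ho,
        show S.card - 2 * (D.card + 1) = S.card - 1 - 1 - 2 * D.card by omega, C_mul]
      ring
    · intro D₁ hD₁ D₂ hD₂ h
      rw [← Finset.erase_insert (notMem_of_mem_matchingsIn_edgesOn_erase_erase hD₁ j),
        ← Finset.erase_insert (notMem_of_mem_matchingsIn_edgesOn_erase_erase hD₂ j)]
      exact congrArg (·.erase s(o, j)) h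
  · intro j₁ _ j₂ _ hne
    refine Finset.disjoint_left.mpr fun D hD hD' => ?_
    obtain ⟨D₁, hD₁, rfl⟩ := Finset.mem_image.mp hD
    obtain ⟨D₂, -, h⟩ := Finset.mem_image.mp hD'
    have hmem : s(o, j₂) ∈ insert s(o, j₁) D₁ := h ▸ Finset.mem_insert_self _ _
    rcases Finset.mem_insert.mp hmem with h' | h'
    · exact hne (Sym2.congr_right.mp h').symm
    · exact notMem_of_mem_matchingsIn_edgesOn_erase_erase hD₁ j₂ h'

theorem eval_matchPolyS_ne_zero_and_le_re_div (w : Sym2 V → ℝ)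
    (hw : ∀ e ∈ completeEdges V, 0 ≤ w e) {z : ℂ} (hz : 0 < z.re) (S : Finset V) :
    (matchPolyS S w).eval z ≠ 0 ∧
      ∀ o ∈ S, z.re ≤ ((matchPolyS S w).eval z / (matchPolyS (S.erase o) w).eval z).re := by
  induction S using Finset.strongInduction with
  | H S ih =>
    have hratio : ∀ o ∈ S,
        z.re ≤ ((matchPolyS S w).eval z / (matchPolyS (S.erase o) w).eval z).re := by
      intro o ho
      obtain ⟨hne, hle⟩ := ih _ (Finset.erase_ssubset ho)
      refine le_re_div_of_eq_mul_add_sum _ (r := fun j => w s(o, j)) hne (fun j hj => hw _ ?_)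
        (fun j hj => hz.le.trans (hle j hj)) ?_
      · simpa [completeEdges, Sym2.mk_isDiag_iff] using (Finset.ne_of_mem_erase hj).symm
      · simp [matchPolyS_eq_X_mul_add_sum w ho, eval_finsetSum, mul_comm]
    refine ⟨?_, hratio⟩
    obtain rfl | ⟨o, ho⟩ := S.eq_empty_or_nonempty
    · simp [matchPolyS_empty]
    · intro h0
      have hle := hratio o ho
      rw [h0, zero_div, Complex.zero_re] at hle
      linarith

/-- the root monomer probability
`M_z(G,o) = z Z_{G−o}(z)/Z_G(z)` satisfies `|M_z(G,o)| ≤ |z|/Re(z)` for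
`Re(z) > 0` and nonnegative dimer weights. -/
theorem root_monomer_probability_bound (w : Sym2 V → ℝ)
    (hw : ∀ e ∈ completeEdges V, 0 ≤ w e) (o : V) (z : ℂ) (hz : 0 < z.re) :
    ‖(z * (matchPolyS (Finset.univ.erase o) w).eval z
        / (matchPolyS Finset.univ w).eval z)‖
      ≤ ‖z‖ / z.re := by
  rw [← div_div_eq_mul_div]
  exact norm_div_le_norm_div_re hz
    ((eval_matchPolyS_ne_zero_and_le_re_div w hw hz Finset.univ).2 o (Finset.mem_univ o))
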